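/- Let λ ∈ (0,1), R ∈ R_L with λ not a pole of R, and K ≥ 1. Let ν_{R,λ,K} be the self-affine measure on ℝ^K associated to the IFS {x ↦ Θ(λ,K)x + v_j(R,λ,K) : j = 1,…,m} with probability vector p, where Θ(λ,K) is the lower-triangular K×K matrix with λ on the diagonal and 1,2,…,K−1 on the subdiagonal, and v_j(R,λ,K) = (T_j(1,R(λ)), T_j(0,R'(λ)), …, T_j(0, R^{(K−1)}(λ)))^T. Then dim ν_{R,λ,K} ≤ h(R,λ,K)/log λ^{-1}, where h(R,λ,K) = lim_n H(B^{(n)}_{R,λ,K})/n is the entropy rate of the n-step random walk B^{(n)}_{R,λ,K} = (A_R^{(n)}(λ), …, d^{K−1}/dX^{K−1} A_R^{(n)}(λ)). -/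

import Mathlib

open Filter MeasureTheory

/-- Shannon entropy of a discrete probability measure. -/
noncomputable def pmfEntropy {α : Type*} (q : PMF α) : ℝ :=
  ∑' a, Real.negMulLog ((q a).toReal)

/-- The real-analytic function on `(-1,1)` defined by an integer power series. -/
noncomputable def seriesFun (P : PowerSeries ℤ) (x : ℝ) : ℝ :=
  ∑' n : ℕ, ((PowerSeries.coeff (R := ℤ) n P : ℤ) : ℝ) * x ^ n

/-- The lower triangular `K×K` matrix `Θ(λ,K)` with `λ` on the diagonal and
`1, 2, …, K-1` on the subdiagonal. -/
noncomputable def Theta (lam : ℝ) (K : ℕ) : Matrix (Fin K) (Fin K) ℝ :=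
  fun i j =>
    if (i : ℕ) = (j : ℕ) then lam
    else if (i : ℕ) = (j : ℕ) + 1 then ((i : ℕ) : ℝ) else 0

/-- Law of the `n`-step random walk `B^{(n)} = ψ_{ξ_0}(B̃^{(n-1)})` driven by i.i.d.
digits with law `ξ` and the maps `ψ_j`, started at `0`. -/
noncomputable def stepLaw {m K : ℕ} (ξ : PMF (Fin m))
    (ψ : Fin m → (Fin K → ℝ) → (Fin K → ℝ)) : ℕ → PMF (Fin K → ℝ)
  | 0 => PMF.pure 0
  | n + 1 => ξ.bind fun j => (stepLaw ξ ψ n).map (ψ j)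

open scoped ENNReal Matrix

/-!
Write `ψ_j x = Θx + v_j`. Then `B^{(a+b)}` is `B^{(a)}` plus `Θ^a` applied to an independent copy
of `B^{(b)}`, so `n ↦ H(B^{(n)})` is subadditive and, by Fekete's lemma, `H(B^{(n)}) ≤ n h'`
for all large `n` whenever `h' > h`. Iterating the self-affinity equation `n` times writes `ν`
as the `B^{(n)}`-average of the images of `ν` under `y ↦ Θⁿy + τ`. All eigenvalues of `Θ` equal
`λ`, so `Θ - λ` is nilpotent (Cayley–Hamilton) and `‖Θⁿ‖ ≤ μⁿ` eventually for every `μ > λ`;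
hence, for a ball `B(0, M)` of positive mass, every atom `τ` of `B^{(n)}` gives
`ν(B(τ, Mμⁿ)) ≥ P(B^{(n)} = τ) · ν(B(0, M))`.
By Markov's inequality for `-log P(B^{(n)} = ·)`, the atoms of mass at least `e^{-ns}` (`s > h'`)
carry mass at least `1 - h'/s`, so a set of positive `ν`-measure consists of points lying in such
balls for infinitely many `n`. At such a point `ν(B(x, 2Mμⁿ)) ≳ e^{-ns}`, which forces
`dim ν · log μ⁻¹ ≤ s`; now let `s ↓ h` and `μ ↓ λ`.
-/

namespace Real

lemma negMulLog_sum_le {ι : Type*} (s : Finset ι) {f : ι → ℝ} (hf : ∀ i ∈ s, 0 ≤ f i) :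
    negMulLog (∑ i ∈ s, f i) ≤ ∑ i ∈ s, negMulLog (f i) := by
  simp only [negMulLog, neg_mul, Finset.sum_mul, ← Finset.sum_neg_distrib]
  refine Finset.sum_le_sum fun i hi => neg_le_neg ?_
  rcases (hf i hi).eq_or_lt with h0 | h0
  · simp [← h0]
  · exact mul_le_mul_of_nonneg_left (log_le_log h0 (Finset.single_le_sum hf hi)) h0.le

end Real

namespace PMF

variable {α β : Type*}

lemma apply_eq_zero_of_support_subset {p : PMF α} {F : Finset α} (hF : p.support ⊆ F) {a : α}
    (ha : a ∉ F) : p a = 0 :=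
  (p.apply_eq_zero_iff a).2 fun h => ha (hF h)

lemma toReal_apply_le_one (p : PMF α) (a : α) : (p a).toReal ≤ 1 :=
  ENNReal.toReal_le_of_le_ofReal zero_le_one (by simpa using p.coe_le_one a)

lemma sum_toReal_eq_one {p : PMF α} {F : Finset α} (hF : p.support ⊆ F) :
    ∑ a ∈ F, (p a).toReal = 1 := by
  have hout : ∀ a ∉ F, p a = 0 := fun a ha => apply_eq_zero_of_support_subset hF ha
  have hsum : ∑ a ∈ F, p a = 1 := (tsum_eq_sum hout).symm.trans p.tsum_coe
  rw [← ENNReal.toReal_sum fun a _ => p.apply_ne_top a, hsum, ENNReal.toReal_one]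

lemma toReal_bind_apply {p : PMF α} {F : Finset α} (hF : p.support ⊆ F) (g : α → PMF β)
    (b : β) : (p.bind g b).toReal = ∑ a ∈ F, (p a).toReal * (g a b).toReal := by
  have hout : ∀ a ∉ F, p a * g a b = 0 := fun a ha => by
    rw [apply_eq_zero_of_support_subset hF ha, zero_mul]
  rw [bind_apply, tsum_eq_sum hout, ENNReal.toReal_sum fun a _ =>
    ENNReal.mul_ne_top (p.apply_ne_top a) ((g a).apply_ne_top b)]
  simp only [ENNReal.toReal_mul]

lemma tsum_bind_mul (p : PMF α) (g : α → PMF β) (f : β → ℝ≥0∞) :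
    ∑' b, p.bind g b * f b = ∑' a, p a * ∑' b, g a b * f b := by
  simp only [bind_apply, ← ENNReal.tsum_mul_right, ← ENNReal.tsum_mul_left, mul_assoc]
  exact ENNReal.tsum_comm

lemma tsum_map_mul (p : PMF α) (h : α → β) (f : β → ℝ≥0∞) :
    ∑' b, p.map h b * f b = ∑' a, p a * f (h a) := by
  rw [← bind_pure_comp, tsum_bind_mul]
  congr! with a
  rw [tsum_eq_single (h a) fun b hb => by simp [pure_apply, hb]]
  simp

end PMF

section Entropy

variable {α β : Type*}

lemma pmfEntropy_nonneg (p : PMF α) : 0 ≤ pmfEntropy p :=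
  tsum_nonneg fun a => Real.negMulLog_nonneg ENNReal.toReal_nonneg (p.toReal_apply_le_one a)

lemma pmfEntropy_eq_sum {p : PMF α} {F : Finset α} (hF : p.support ⊆ F) :
    pmfEntropy p = ∑ a ∈ F, Real.negMulLog (p a).toReal := by
  refine tsum_eq_sum fun a ha => ?_
  rw [PMF.apply_eq_zero_of_support_subset hF ha, ENNReal.toReal_zero, Real.negMulLog_zero]

lemma pmfEntropy_map_le {p : PMF α} (hp : p.support.Finite) (f : α → β) :
    pmfEntropy (p.map f) ≤ pmfEntropy p := by
  classical
  set F := hp.toFinset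
  have hF : p.support ⊆ F := hp.coe_toFinset.ge
  have hmap : (p.map f).support ⊆ F.image f := by
    rw [PMF.support_map, Finset.coe_image]
    exact Set.image_mono hF
  have hfib : ∀ b, ((p.map f) b).toReal = ∑ a ∈ F, if b = f a then (p a).toReal else 0 := by
    intro b
    rw [← PMF.bind_pure_comp, PMF.toReal_bind_apply hF]
    simp [PMF.pure_apply, apply_ite ENNReal.toReal]
  calc pmfEntropy (p.map f)
      = ∑ b ∈ F.image f, Real.negMulLog ((p.map f) b).toReal := pmfEntropy_eq_sum hmap
    _ ≤ ∑ b ∈ F.image f, ∑ a ∈ F, if b = f a then Real.negMulLog (p a).toReal else 0 := by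
        refine Finset.sum_le_sum fun b _ => ?_
        rw [hfib]
        refine (Real.negMulLog_sum_le F fun a _ => by positivity).trans_eq ?_
        exact Finset.sum_congr rfl fun a _ => by split_ifs <;> simp
    _ = pmfEntropy p := by
        rw [Finset.sum_comm, pmfEntropy_eq_sum hF]
        exact Finset.sum_congr rfl fun a ha => by
          rw [Finset.sum_ite_eq', if_pos (Finset.mem_image_of_mem f ha)]

lemma pmfEntropy_bind_le {p : PMF α} (hp : p.support.Finite) {g : α → PMF β}
    (hg : ∀ a, (g a).support.Finite) {B : ℝ} (hB : ∀ a, pmfEntropy (g a) ≤ B) :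
    pmfEntropy (p.bind g) ≤ pmfEntropy p + B := by
  classical
  set F := hp.toFinset
  have hF : p.support ⊆ F := hp.coe_toFinset.ge
  set G := F.biUnion fun a => (hg a).toFinset
  have hgG : ∀ a ∈ F, (g a).support ⊆ G := fun a ha b hb =>
    Finset.mem_biUnion.2 ⟨a, ha, by simpa using hb⟩
  have hbind : (p.bind g).support ⊆ G := by
    intro b hb
    obtain ⟨a, ha, hab⟩ := by simpa using hb
    exact hgG a (by simpa [F] using ha) hab
  calc pmfEntropy (p.bind g)
      = ∑ b ∈ G, Real.negMulLog (p.bind g b).toReal := pmfEntropy_eq_sum hbind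
    _ ≤ ∑ b ∈ G, ∑ a ∈ F, Real.negMulLog ((p a).toReal * (g a b).toReal) := by
        refine Finset.sum_le_sum fun b _ => ?_
        rw [PMF.toReal_bind_apply hF]
        exact Real.negMulLog_sum_le F fun a _ => by positivity
    _ = ∑ a ∈ F, (Real.negMulLog (p a).toReal + (p a).toReal * pmfEntropy (g a)) := by
        rw [Finset.sum_comm]
        refine Finset.sum_congr rfl fun a ha => ?_
        simp only [Real.negMulLog_mul, Finset.sum_add_distrib, ← Finset.sum_mul,
          ← Finset.mul_sum, PMF.sum_toReal_eq_one (hgG a ha), one_mul,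
          ← pmfEntropy_eq_sum (hgG a ha)]
    _ ≤ ∑ a ∈ F, (Real.negMulLog (p a).toReal + (p a).toReal * B) :=
        Finset.sum_le_sum fun a _ => by gcongr; exact hB a
    _ = pmfEntropy p + B := by
        rw [Finset.sum_add_distrib, ← Finset.sum_mul, PMF.sum_toReal_eq_one hF,
          one_mul, ← pmfEntropy_eq_sum hF]

lemma mul_le_negMulLog_of_lt_exp_neg {x s : ℝ} (hx : 0 ≤ x) (hxs : x < Real.exp (-s)) :
    s * x ≤ Real.negMulLog x := by
  rcases hx.eq_or_lt with rfl | hx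
  · simp
  have hlog : Real.log x < -s := (Real.log_lt_iff_lt_exp hx).2 hxs
  rw [Real.negMulLog]
  nlinarith

lemma ofReal_one_sub_pmfEntropy_div_le_sum_filter {q : PMF α} {F : Finset α}
    (hF : q.support ⊆ F) {s : ℝ} (hs : 0 < s) :
    ENNReal.ofReal (1 - pmfEntropy q / s) ≤ ∑ a ∈ F with Real.exp (-s) ≤ (q a).toReal, q a := by
  have hsmall : s * ∑ a ∈ F with ¬ Real.exp (-s) ≤ (q a).toReal, (q a).toReal ≤ pmfEntropy q :=
    calc s * ∑ a ∈ F with ¬ Real.exp (-s) ≤ (q a).toReal, (q a).toReal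
        ≤ ∑ a ∈ F with ¬ Real.exp (-s) ≤ (q a).toReal, Real.negMulLog (q a).toReal := by
          rw [Finset.mul_sum]
          refine Finset.sum_le_sum fun a ha => ?_
          exact mul_le_negMulLog_of_lt_exp_neg ENNReal.toReal_nonneg
            (not_le.1 (Finset.mem_filter.1 ha).2)
      _ ≤ pmfEntropy q := by
          rw [pmfEntropy_eq_sum hF]
          exact Finset.sum_le_sum_of_subset_of_nonneg (Finset.filter_subset _ _) fun a _ _ =>
            Real.negMulLog_nonneg ENNReal.toReal_nonneg (q.toReal_apply_le_one a)
  have htotal := PMF.sum_toReal_eq_one hF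
  rw [← Finset.sum_filter_add_sum_filter_not F (fun a => Real.exp (-s) ≤ (q a).toReal)] at htotal
  rw [← ENNReal.ofReal_toReal (a := ∑ a ∈ F with _, q a)
      (ENNReal.sum_ne_top.2 fun a _ => q.apply_ne_top a),
    ENNReal.toReal_sum fun a _ => q.apply_ne_top a]
  refine ENNReal.ofReal_le_ofReal ?_
  have hdiv : ∑ a ∈ F with ¬ Real.exp (-s) ≤ (q a).toReal, (q a).toReal ≤ pmfEntropy q / s := by
    rw [le_div_iff₀ hs]; linarith
  linarith

end Entropy

section StepLaw

variable {m K : ℕ} (ξ : PMF (Fin m)) (ψ : Fin m → (Fin K → ℝ) → (Fin K → ℝ))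

lemma support_stepLaw_finite (n : ℕ) : (stepLaw ξ ψ n).support.Finite := by
  induction n with
  | zero => simp [stepLaw]
  | succ n ih =>
    rw [stepLaw, PMF.support_bind]
    exact (Set.toFinite _).biUnion fun j _ => by rw [PMF.support_map]; exact ih.image _

variable {ξ ψ} {A : Matrix (Fin K) (Fin K) ℝ} {c : Fin m → Fin K → ℝ}

lemma affine_apply_pow_mulVec_add (hψ : ∀ j x, ψ j x = A *ᵥ x + c j) (j : Fin m) (n : ℕ)
    (y u : Fin K → ℝ) : ψ j ((A ^ n) *ᵥ y + u) = (A ^ (n + 1)) *ᵥ y + ψ j u := by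
  rw [hψ, hψ, Matrix.mulVec_add, Matrix.mulVec_mulVec, pow_succ']
  abel

lemma stepLaw_add (hψ : ∀ j x, ψ j x = A *ᵥ x + c j) (a b : ℕ) :
    stepLaw ξ ψ (a + b) =
      (stepLaw ξ ψ a).bind fun u => (stepLaw ξ ψ b).map fun y => (A ^ a) *ᵥ y + u := by
  induction a with
  | zero =>
    simp only [Nat.zero_add, stepLaw, PMF.pure_bind, pow_zero, Matrix.one_mulVec, add_zero]
    exact (PMF.map_id _).symm
  | succ a ih =>
    rw [Nat.add_right_comm, stepLaw, ih, stepLaw, PMF.bind_bind]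
    refine congrArg _ (funext fun j => ?_)
    simp only [PMF.map_bind, PMF.bind_map, PMF.map_comp]
    refine congrArg _ (funext fun u => ?_)
    simp only [Function.comp_def, affine_apply_pow_mulVec_add hψ]

lemma subadditive_pmfEntropy_stepLaw (hψ : ∀ j x, ψ j x = A *ᵥ x + c j) :
    Subadditive fun n => pmfEntropy (stepLaw ξ ψ n) := fun a b => by
  dsimp only
  rw [stepLaw_add hψ]
  exact pmfEntropy_bind_le (support_stepLaw_finite ξ ψ a)
    (fun u => by rw [PMF.support_map]; exact (support_stepLaw_finite ξ ψ b).image _)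
    fun u => pmfEntropy_map_le (support_stepLaw_finite ξ ψ b) _

end StepLaw

section SelfAffine

variable {m K : ℕ} {ξ : PMF (Fin m)} {ψ : Fin m → (Fin K → ℝ) → (Fin K → ℝ)}
  {A : Matrix (Fin K) (Fin K) ℝ} {c : Fin m → Fin K → ℝ} {ν : Measure (Fin K → ℝ)}

lemma measurable_of_affine (hψ : ∀ j x, ψ j x = A *ᵥ x + c j) (j : Fin m) :
    Measurable (ψ j) := by
  rw [funext (hψ j)]
  exact (Continuous.matrix_mulVec continuous_const continuous_id).add continuous_const
    |>.measurable

lemma measure_eq_sum_preimage (hψ : ∀ j x, ψ j x = A *ᵥ x + c j)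
    (hself : ν = ∑ j, ξ j • ν.map (ψ j)) {s : Set (Fin K → ℝ)} (hs : MeasurableSet s) :
    ν s = ∑' j, ξ j * ν (ψ j ⁻¹' s) := by
  conv_lhs => rw [hself]
  simp [tsum_fintype, Measure.map_apply (measurable_of_affine hψ _) hs]

lemma measure_eq_tsum_stepLaw (hψ : ∀ j x, ψ j x = A *ᵥ x + c j)
    (hself : ν = ∑ j, ξ j • ν.map (ψ j)) (n : ℕ) {s : Set (Fin K → ℝ)} (hs : MeasurableSet s) :
    ν s = ∑' u, stepLaw ξ ψ n u * ν ((fun y => (A ^ n) *ᵥ y + u) ⁻¹' s) := by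
  induction n generalizing s with
  | zero => simp [stepLaw, PMF.pure_apply]
  | succ n ih =>
    have hpre : ∀ j u, (fun y => (A ^ (n + 1)) *ᵥ y + ψ j u) ⁻¹' s
        = (fun y => (A ^ n) *ᵥ y + u) ⁻¹' (ψ j ⁻¹' s) := fun j u => by
      ext y
      simp [affine_apply_pow_mulVec_add hψ]
    rw [stepLaw, PMF.tsum_bind_mul, measure_eq_sum_preimage hψ hself hs]
    refine tsum_congr fun j => ?_
    rw [PMF.tsum_map_mul, ih (hs.preimage (measurable_of_affine hψ j))]
    simp only [hpre]

lemma sum_stepLaw_mul_measure_le (hψ : ∀ j x, ψ j x = A *ᵥ x + c j)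
    (hself : ν = ∑ j, ξ j • ν.map (ψ j)) (n : ℕ) {S : Finset (Fin K → ℝ)}
    {B E : Set (Fin K → ℝ)} (hE : MeasurableSet E) (hBE : ∀ τ ∈ S, ∀ y ∈ B, (A ^ n) *ᵥ y + τ ∈ E) :
    (∑ τ ∈ S, stepLaw ξ ψ n τ) * ν B ≤ ν E := by
  rw [measure_eq_tsum_stepLaw hψ hself n hE, Finset.sum_mul]
  exact (Finset.sum_le_sum fun τ hτ => mul_le_mul_right (measure_mono fun y hy => hBE τ hτ y hy)
    _).trans (ENNReal.sum_le_tsum S)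

end SelfAffine

section NilpotentPerturbation

variable {R : Type*} [NormedRing R] [NormedAlgebra ℝ R]

lemma norm_add_pow_le_of_pow_eq_zero {N : R} {K : ℕ} (hN : N ^ K = 0) {l : ℝ} (hl : 0 < l)
    {n : ℕ} (hn : 1 ≤ n) :
    ‖(algebraMap ℝ R l + N) ^ n‖ ≤ (∑ i ∈ Finset.range K, l⁻¹ ^ i * ‖N ^ i‖) * n ^ K * l ^ n := by
  have hcomm : Commute N (algebraMap ℝ R l) := (Algebra.commutes l N).symm
  have hterm : ∀ i ∈ Finset.range (n + 1),
      ‖N ^ i * algebraMap ℝ R l ^ (n - i) * (n.choose i : R)‖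
        ≤ n ^ K * l ^ n * (l⁻¹ ^ i * ‖N ^ i‖) := by
    intro i hi
    have hin : i ≤ n := Nat.lt_succ_iff.1 (Finset.mem_range.1 hi)
    rcases lt_or_ge i K with hiK | hiK
    · have hsmul : N ^ i * algebraMap ℝ R l ^ (n - i) * (n.choose i : R)
          = ((n.choose i : ℝ) * l ^ (n - i)) • N ^ i := by
        rw [mul_smul, Nat.cast_smul_eq_nsmul, ← map_pow, ← Algebra.commutes, ← Algebra.smul_def,
          ← Nat.cast_comm, ← nsmul_eq_mul]
      have hchoose : (n.choose i : ℝ) ≤ n ^ K := by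
        exact_mod_cast (Nat.choose_le_pow n i).trans (Nat.pow_le_pow_right hn hiK.le)
      rw [hsmul, norm_smul, Real.norm_of_nonneg (by positivity), pow_sub₀ l hl.ne' hin,
        ← inv_pow]
      calc (n.choose i : ℝ) * (l ^ n * l⁻¹ ^ i) * ‖N ^ i‖
          ≤ n ^ K * (l ^ n * l⁻¹ ^ i) * ‖N ^ i‖ := by gcongr
        _ = n ^ K * l ^ n * (l⁻¹ ^ i * ‖N ^ i‖) := by ring
    · simp [pow_eq_zero_of_le hiK hN]
  calc ‖(algebraMap ℝ R l + N) ^ n‖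
      ≤ ∑ i ∈ Finset.range (n + 1), ‖N ^ i * algebraMap ℝ R l ^ (n - i) * (n.choose i : R)‖ := by
        rw [add_comm, hcomm.add_pow]
        exact norm_sum_le _ _
    _ ≤ ∑ i ∈ Finset.range (n + 1), n ^ K * l ^ n * (l⁻¹ ^ i * ‖N ^ i‖) :=
        Finset.sum_le_sum hterm
    _ ≤ (∑ i ∈ Finset.range K, l⁻¹ ^ i * ‖N ^ i‖) * n ^ K * l ^ n := by
        rw [← Finset.mul_sum, mul_comm, mul_assoc]
        refine mul_le_mul_of_nonneg_right ?_ (by positivity)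
        rw [← Finset.sum_filter_of_ne (p := (· < K)) fun i _ hi => by
          by_contra hiK
          simp [pow_eq_zero_of_le (not_lt.1 hiK) hN] at hi]
        exact Finset.sum_le_sum_of_subset_of_nonneg (fun i hi => by simp at hi ⊢; exact hi.2)
          fun i _ _ => by positivity

lemma eventually_norm_pow_le_of_isNilpotent {a : R} {l μ : ℝ} (hl : 0 < l) (hlμ : l < μ)
    (ha : IsNilpotent (a - algebraMap ℝ R l)) :
    ∀ᶠ n : ℕ in atTop, ‖a ^ n‖ ≤ μ ^ n := by
  obtain ⟨K, hK⟩ := ha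
  set C := ∑ i ∈ Finset.range K, l⁻¹ ^ i * ‖(a - algebraMap ℝ R l) ^ i‖
  have hμ : 0 < μ := hl.trans hlμ
  have hratio : |l / μ| < 1 := by
    rw [abs_of_pos (div_pos hl hμ)]
    exact (div_lt_one hμ).2 hlμ
  have hlim : Tendsto (fun n : ℕ => C * ((n : ℝ) ^ K * (l / μ) ^ n)) atTop (nhds 0) := by
    simpa using (tendsto_pow_const_mul_const_pow_of_abs_lt_one K hratio).const_mul C
  filter_upwards [hlim.eventually (ge_mem_nhds zero_lt_one), eventually_ge_atTop 1] with n hn1 hn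
  calc ‖a ^ n‖ = ‖(algebraMap ℝ R l + (a - algebraMap ℝ R l)) ^ n‖ := by rw [add_sub_cancel]
    _ ≤ C * n ^ K * l ^ n := norm_add_pow_le_of_pow_eq_zero hK hl hn
    _ = C * (n ^ K * (l / μ) ^ n) * μ ^ n := by
        rw [div_pow]
        field_simp
    _ ≤ μ ^ n := mul_le_of_le_one_left (by positivity) hn1

end NilpotentPerturbation

open Polynomial in
lemma isNilpotent_Theta_sub_algebraMap (lam : ℝ) (K : ℕ) :
    IsNilpotent (Theta lam K - algebraMap ℝ _ lam) := by
  have htri : (Theta lam K)ᵀ.IsUpperTriangular := fun i j hji => by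
    have h1 : (j : ℕ) ≠ i := by simp only [id] at hji; omega
    have h2 : (j : ℕ) ≠ i + 1 := by simp only [id] at hji; omega
    simp [Theta, h1, h2]
  have hchar : (Theta lam K).charpoly = (X - C lam) ^ K := by
    rw [← Matrix.charpoly_transpose, Matrix.charpoly_of_isUpperTriangular _ htri]
    simp [Theta]
  exact ⟨K, by simpa [hchar] using Matrix.aeval_self_charpoly (Theta lam K)⟩

section OperatorNorm

open scoped Matrix.Norms.Operator

lemma eventually_norm_Theta_pow_mulVec_le {lam μ : ℝ} (hl : 0 < lam) (hlμ : lam < μ) (K : ℕ) :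
    ∀ᶠ n : ℕ in atTop, ∀ y : Fin K → ℝ, ‖(Theta lam K ^ n) *ᵥ y‖ ≤ μ ^ n * ‖y‖ := by
  filter_upwards [eventually_norm_pow_le_of_isNilpotent hl hlμ
    (isNilpotent_Theta_sub_algebraMap lam K)] with n hn y
  exact (Matrix.linfty_opNorm_mulVec _ y).trans (by gcongr)

end OperatorNorm

section LocalDimension

variable {X : Type*} [MeasurableSpace X]

lemma frequently_ae_frequently_mem_of_le_measure {μ : Measure X} [IsFiniteMeasure μ]
    {E : ℕ → Set X} (hE : ∀ n, MeasurableSet (E n)) {δ : ℝ≥0∞} (hδ : δ ≠ 0)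
    (h : ∀ᶠ n in atTop, δ ≤ μ (E n)) : ∃ᵐ x ∂μ, ∃ᶠ n in atTop, x ∈ E n := by
  by_contra hcon
  simp only [Filter.not_frequently] at hcon
  have hlim : Tendsto (fun n => μ (E n)) atTop (nhds 0) := by
    simpa using tendsto_measure_of_ae_tendsto_indicator_of_isFiniteMeasure atTop
      MeasurableSet.empty hE (hcon.mono fun x hx => by simpa using hx)
  obtain ⟨n, hn, hn'⟩ := (h.and (hlim.eventually (gt_mem_nhds (pos_iff_ne_zero.2 hδ)))).exists
  exact (hn.trans_lt hn').false

variable [PseudoMetricSpace X]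

lemma exists_pos_measure_closedBall (ν : Measure X) [NeZero ν] (x : X) :
    ∃ M : ℝ, 0 < M ∧ ν (Metric.closedBall x M) ≠ 0 := by
  obtain ⟨k, hk⟩ := exists_measure_pos_of_not_measure_iUnion_null (μ := ν)
    (s := fun k : ℕ => Metric.closedBall x k)
    (by simp [Metric.iUnion_closedBall_nat, NeZero.ne ν])
  refine ⟨k + 1, by positivity, (hk.trans_le (measure_mono ?_)).ne'⟩
  exact Metric.closedBall_subset_closedBall (by linarith)

lemma mul_log_inv_le_of_frequently_le_measure_closedBall {ν : Measure X} {x : X} {d : ℝ}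
    (hd : Tendsto (fun r => Real.log (ν (Metric.closedBall x r)).toReal / Real.log r)
      (nhdsWithin 0 (Set.Ioi 0)) (nhds d))
    {a b μ s : ℝ} (ha : 0 < a) (hb : 0 < b) (hμ0 : 0 < μ) (hμ1 : μ < 1)
    (h : ∃ᶠ n : ℕ in atTop,
      a * Real.exp (-(n * s)) ≤ (ν (Metric.closedBall x (b * μ ^ n))).toReal) :
    d * Real.log μ⁻¹ ≤ s := by
  set r : ℕ → ℝ := fun n => b * μ ^ n
  have hr : Tendsto r atTop (nhdsWithin 0 (Set.Ioi 0)) := tendsto_nhdsWithin_iff.2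
    ⟨by simpa using (tendsto_pow_atTop_nhds_zero_of_lt_one hμ0.le hμ1).const_mul b,
      Eventually.of_forall fun n => show 0 < b * μ ^ n by positivity⟩
  have hrate : Tendsto (fun n : ℕ => Real.log (r n) / n) atTop (nhds (Real.log μ)) := by
    have hlim := (tendsto_const_div_atTop_nhds_zero_nat (Real.log b)).add_const (Real.log μ)
    rw [zero_add] at hlim
    refine hlim.congr' ((eventually_ne_atTop 0).mono fun n hn => ?_)
    simp only [r]
    rw [Real.log_mul hb.ne' (by positivity), Real.log_pow]
    field_simp
  have hmass : Tendsto (fun n : ℕ => Real.log (ν (Metric.closedBall x (r n))).toReal / n)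
      atTop (nhds (d * Real.log μ)) := by
    refine ((hd.comp hr).mul hrate).congr' ?_
    filter_upwards [hrate.eventually (gt_mem_nhds (Real.log_neg hμ0 hμ1))] with n hn
    have hlog : Real.log (r n) ≠ 0 := fun h0 => by simp [h0] at hn
    simp only [Function.comp_apply]
    field_simp
  have hlower : Tendsto (fun n : ℕ => Real.log a / n - s) atTop (nhds (-s)) := by
    simpa using (tendsto_const_div_atTop_nhds_zero_nat (Real.log a)).sub_const s
  have hfreq : ∃ᶠ n : ℕ in atTop,
      Real.log a / n - s ≤ Real.log (ν (Metric.closedBall x (r n))).toReal / n := by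
    refine (h.and_eventually (eventually_gt_atTop 0)).mono fun n ⟨hn, hn0⟩ => ?_
    have hlog := Real.log_le_log (by positivity) hn
    rw [Real.log_mul ha.ne' (Real.exp_pos _).ne', Real.log_exp] at hlog
    have hn0' : (0 : ℝ) < n := Nat.cast_pos.2 hn0
    rw [div_sub' hn0'.ne', div_le_div_iff_of_pos_right hn0']
    linarith
  have := le_of_tendsto_of_tendsto_of_frequently hlower hmass hfreq
  rw [Real.log_inv]
  linarith

end LocalDimension

section DimensionBound

variable {m K : ℕ} {ξ : PMF (Fin m)} {ψ : Fin m → (Fin K → ℝ) → (Fin K → ℝ)}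
  {A : Matrix (Fin K) (Fin K) ℝ} {c : Fin m → Fin K → ℝ} {ν : Measure (Fin K → ℝ)}

theorem mul_log_inv_le_of_eventually_pmfEntropy_le (hψ : ∀ j x, ψ j x = A *ᵥ x + c j)
    [IsProbabilityMeasure ν] (hself : ν = ∑ j, ξ j • ν.map (ψ j))
    {μ : ℝ} (hμ0 : 0 < μ) (hμ1 : μ < 1)
    (hA : ∀ᶠ n : ℕ in atTop, ∀ y, ‖(A ^ n) *ᵥ y‖ ≤ μ ^ n * ‖y‖)
    {h s : ℝ} (hH : ∀ᶠ n : ℕ in atTop, pmfEntropy (stepLaw ξ ψ n) ≤ n * h) (hhs : h < s)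
    {d : ℝ} (hdim : ∀ᵐ x ∂ν, Tendsto
      (fun r => Real.log (ν (Metric.closedBall x r)).toReal / Real.log r)
      (nhdsWithin 0 (Set.Ioi 0)) (nhds d)) :
    d * Real.log μ⁻¹ ≤ s := by
  obtain ⟨M, hM0, hMpos⟩ := exists_pos_measure_closedBall ν 0
  have hs : 0 < s := by
    obtain ⟨n, hn, hn0⟩ := (hH.and (eventually_gt_atTop 0)).exists
    have := (mul_nonneg_iff_of_pos_left (Nat.cast_pos.2 hn0)).1 ((pmfEntropy_nonneg _).trans hn)
    linarith
  set S : ℕ → Finset (Fin K → ℝ) := fun n => (support_stepLaw_finite ξ ψ n).toFinset.filter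
    fun τ => Real.exp (-(n * s)) ≤ (stepLaw ξ ψ n τ).toReal
  set E : ℕ → Set (Fin K → ℝ) := fun n => ⋃ τ ∈ S n, Metric.closedBall τ (M * μ ^ n)
  have hEmeas : ∀ n, MeasurableSet (E n) := fun n =>
    (S n).measurableSet_biUnion fun τ _ => measurableSet_closedBall
  have hcover : ∀ᶠ n : ℕ in atTop, ∀ τ, ∀ y ∈ Metric.closedBall (0 : Fin K → ℝ) M,
      (A ^ n) *ᵥ y + τ ∈ Metric.closedBall τ (M * μ ^ n) := by
    filter_upwards [hA] with n hn τ y hy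
    rw [Metric.mem_closedBall, dist_eq_norm, add_sub_cancel_right]
    rw [mem_closedBall_zero_iff] at hy
    exact (hn y).trans (by rw [mul_comm M]; gcongr)
  have hmassE :
      ∀ᶠ n in atTop, ENNReal.ofReal (1 - h / s) * ν (Metric.closedBall 0 M) ≤ ν (E n) := by
    filter_upwards [hH, hcover, eventually_gt_atTop 0] with n hn hcov hn0
    have hrate : ENNReal.ofReal (1 - h / s) ≤ ∑ τ ∈ S n, stepLaw ξ ψ n τ := by
      refine le_trans (ENNReal.ofReal_le_ofReal ?_) (ofReal_one_sub_pmfEntropy_div_le_sum_filter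
        (support_stepLaw_finite ξ ψ n).coe_toFinset.ge (by positivity))
      rw [← mul_div_mul_left h s (Nat.cast_pos.2 hn0).ne']
      gcongr
    exact (mul_le_mul_left hrate _).trans (sum_stepLaw_mul_measure_le hψ hself n (hEmeas n)
      fun τ hτ y hy => Set.mem_biUnion hτ (hcov τ y hy))
  have hδ : ENNReal.ofReal (1 - h / s) * ν (Metric.closedBall 0 M) ≠ 0 :=
    mul_ne_zero (ENNReal.ofReal_pos.2 (by rw [sub_pos, div_lt_one hs]; exact hhs)).ne' hMpos
  obtain ⟨x₀, hx₀E, hx₀d⟩ :=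
    ((frequently_ae_frequently_mem_of_le_measure hEmeas hδ hmassE).and_eventually hdim).exists
  refine mul_log_inv_le_of_frequently_le_measure_closedBall hx₀d
    (ENNReal.toReal_pos hMpos (measure_ne_top _ _)) (by positivity : (0 : ℝ) < 2 * M) hμ0 hμ1
    ((hx₀E.and_eventually hcover).mono fun n ⟨hxn, hcov⟩ => ?_)
  obtain ⟨τ, hτ, hxτ⟩ := Set.mem_iUnion₂.1 hxn
  have hball : Metric.closedBall τ (M * μ ^ n) ⊆ Metric.closedBall x₀ (2 * M * μ ^ n) :=
    Metric.closedBall_subset_closedBall' (by rw [Metric.mem_closedBall, dist_comm] at hxτ; linarith)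
  have hτmass := sum_stepLaw_mul_measure_le hψ hself n (S := {τ}) measurableSet_closedBall
    fun τ' hτ' y hy => by rw [Finset.mem_singleton.1 hτ']; exact hball (hcov τ y hy)
  rw [Finset.sum_singleton] at hτmass
  have hτreal := ENNReal.toReal_mono (measure_ne_top _ _) hτmass
  rw [ENNReal.toReal_mul] at hτreal
  refine le_trans ?_ hτreal
  rw [mul_comm]
  exact mul_le_mul_of_nonneg_right (Finset.mem_filter.1 hτ).2 ENNReal.toReal_nonneg

end DimensionBound

theorem stmt18_general {m : ℕ} (a b : Fin m → ℤ) (ξ : PMF (Fin m))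
    (lam : ℝ) (hlam : lam ∈ Set.Ioo (0 : ℝ) 1) (K : ℕ) (g : ℝ → ℝ)
    (ψ : Fin m → (Fin K → ℝ) → (Fin K → ℝ))
    (hψ : ∀ j x i, ψ j x i = (Theta lam K).mulVec x i +
      ((if (i : ℕ) = 0 then ((a j : ℤ) : ℝ) else 0) +
        ((b j : ℤ) : ℝ) * iteratedDeriv (i : ℕ) g lam))
    (ν : Measure (Fin K → ℝ)) [IsProbabilityMeasure ν]
    (hself : ν = ∑ j, ξ j • ν.map (ψ j))
    (d : ℝ)
    (hdim : ∀ᵐ x ∂ν, Tendsto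
      (fun r => Real.log (ν (Metric.closedBall x r)).toReal / Real.log r)
      (nhdsWithin 0 (Set.Ioi 0)) (nhds d)) :
    d ≤ (⨅ n : ℕ, pmfEntropy (stepLaw ξ ψ (n + 1)) / ((n : ℝ) + 1)) / Real.log lam⁻¹ := by
  obtain ⟨hl0, hl1⟩ := hlam
  have hψA : ∀ j x, ψ j x = Theta lam K *ᵥ x +
      fun i : Fin K => (if (i : ℕ) = 0 then (a j : ℝ) else 0) + (b j : ℝ) * iteratedDeriv i g lam :=
    fun j x => funext (hψ j x)
  set h := ⨅ n : ℕ, pmfEntropy (stepLaw ξ ψ (n + 1)) / ((n : ℝ) + 1)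
  have hbound : ∀ μ ∈ Set.Ioo lam 1, d * Real.log μ⁻¹ ≤ h := by
    rintro μ ⟨hlμ, hμ1⟩
    refine le_of_forall_gt_imp_ge_of_dense fun s hs => ?_
    obtain ⟨h', hh', hh's⟩ := exists_between hs
    obtain ⟨n, hn⟩ := exists_lt_of_ciInf_lt hh'
    have hH : ∀ᶠ p : ℕ in atTop, pmfEntropy (stepLaw ξ ψ p) ≤ p * h' := by
      filter_upwards [(subadditive_pmfEntropy_stepLaw hψA).eventually_div_lt_of_div_lt
        n.succ_ne_zero (by exact_mod_cast hn), eventually_gt_atTop 0] with p hp hp0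
      exact ((div_lt_iff₀' (Nat.cast_pos.2 hp0)).1 hp).le
    exact mul_log_inv_le_of_eventually_pmfEntropy_le hψA hself (hl0.trans hlμ) hμ1
      (eventually_norm_Theta_pow_mulVec_le hl0 hlμ K) hH hh's hdim
  have hcont : ContinuousAt (fun μ => d * Real.log μ⁻¹) lam :=
    continuousAt_const.mul ((Real.continuousAt_log (inv_ne_zero hl0.ne')).comp
      (continuousAt_inv₀ hl0.ne'))
  rw [le_div_iff₀ (Real.log_pos (one_lt_inv_iff₀.2 ⟨hl0, hl1⟩))]
  exact le_of_tendsto (hcont.tendsto.mono_left nhdsWithin_le_nhds)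
    (eventually_of_mem (Ioo_mem_nhdsGT hl1) hbound)

/-- The self-affine measure `ν_{R,λ,K}` associated to the IFS
`{x ↦ Θ(λ,K)x + v_j(R,λ,K)}` (where `v_j` is built from `T_j(Y₁,Y₂) = a_jY₁ + b_jY₂`
and the first `K-1` derivatives at `λ` of a local analytic representative `g` of
`R = F₁/F₂ ∈ R_L`) has exact dimension at most `h(R,λ,K)/log λ⁻¹`, where
`h(R,λ,K) = lim_n H(B^{(n)}_{R,λ,K})/n = inf_n H(B^{(n)}_{R,λ,K})/n`. -/
theorem stmt18 {m : ℕ} (a b : Fin m → ℤ) (hab : Function.Injective fun j => (a j, b j))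
    (ξ : PMF (Fin m)) (hξ : ∀ j, ξ j ≠ 0)
    (lam : ℝ) (hlam : lam ∈ Set.Ioo (0 : ℝ) 1) (K : ℕ) (hK : 1 ≤ K)
    (L : ℕ) (F₁ F₂ : PowerSeries ℤ) (hF₂ : F₂ ≠ 0)
    (hc1 : ∀ i : ℕ, |PowerSeries.coeff (R := ℤ) i F₁| ≤ (L : ℤ))
    (hc2 : ∀ i : ℕ, |PowerSeries.coeff (R := ℤ) i F₂| ≤ (L : ℤ))
    (g : ℝ → ℝ) (hg : AnalyticAt ℝ g lam)
    (hgr : ∀ᶠ x in nhds lam, seriesFun F₂ x * g x = seriesFun F₁ x)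
    (ψ : Fin m → (Fin K → ℝ) → (Fin K → ℝ))
    (hψ : ∀ j x i, ψ j x i = (Theta lam K).mulVec x i +
      ((if (i : ℕ) = 0 then ((a j : ℤ) : ℝ) else 0) +
        ((b j : ℤ) : ℝ) * iteratedDeriv (i : ℕ) g lam))
    (ν : Measure (Fin K → ℝ)) [IsProbabilityMeasure ν]
    (hself : ν = ∑ j, ξ j • ν.map (ψ j))
    (d : ℝ)
    (hdim : ∀ᵐ x ∂ν, Tendsto
      (fun r => Real.log (ν (Metric.closedBall x r)).toReal / Real.log r)
      (nhdsWithin 0 (Set.Ioi 0)) (nhds d)) :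
    d ≤ (⨅ n : ℕ, pmfEntropy (stepLaw ξ ψ (n + 1)) / ((n : ℝ) + 1)) / Real.log lam⁻¹ :=
  stmt18_general a b ξ lam hlam K g ψ hψ ν hself d hdim
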